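/- arXiv:1711.10181 — 3 statements merged into one kernel-verified Lean document; each statement's English description precedes it below -/
import Mathlib

section
/- With A₁, A₂, B₁, B₂ defined as in the non-commutative Swanson model (in terms of x̂ⱼ, p̂ⱼ satisfying [x̂ⱼ,p̂ₖ]=iδⱼₖ, [x̂₁,x̂₂]=iθ, [p̂ⱼ,p̂ₖ]=0), one has [A₁,B₁] = [A₂,B₂] = 1, [A₁,B₂] = [A₂,B₁] = 0, [A₁,A₂] = 0, and [B₁,B₂] = 0. -/
open Ring

/-- The operators `A₁, A₂, B₁, B₂` of the non-commutative Swanson model satisfy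
the two-dimensional pseudo-bosonic commutation relations. -/
theorem swanson_pseudo_bosonic_commutators
    {𝔄 : Type*} [Ring 𝔄] [Algebra ℂ 𝔄]
    (x₁ x₂ p₁ p₂ : 𝔄) (θ ν : ℝ)
    (h11 : ⁅x₁, p₁⁆ = Complex.I • (1 : 𝔄))
    (h22 : ⁅x₂, p₂⁆ = Complex.I • (1 : 𝔄))
    (h12 : ⁅x₁, p₂⁆ = 0) (h21 : ⁅x₂, p₁⁆ = 0)
    (hxx : ⁅x₁, x₂⁆ = (Complex.I * θ) • (1 : 𝔄)) (hpp : ⁅p₁, p₂⁆ = 0) :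
    let eν := Complex.exp (Complex.I * ν)
    let eν' := Complex.exp (-(Complex.I * ν))
    let A₁ := ((Real.sqrt 2 : ℂ))⁻¹ • (eν • x₁ + ((θ:ℂ)/2 * eν) • p₂ + (Complex.I * eν') • p₁)
    let A₂ := ((Real.sqrt 2 : ℂ))⁻¹ • (eν • x₂ - ((θ:ℂ)/2 * eν) • p₁ + (Complex.I * eν') • p₂)
    let B₁ := ((Real.sqrt 2 : ℂ))⁻¹ • (eν • x₁ + ((θ:ℂ)/2 * eν) • p₂ - (Complex.I * eν') • p₁)
    let B₂ := ((Real.sqrt 2 : ℂ))⁻¹ • (eν • x₂ - ((θ:ℂ)/2 * eν) • p₁ - (Complex.I * eν') • p₂)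
    ⁅A₁, B₁⁆ = 1 ∧ ⁅A₂, B₂⁆ = 1 ∧ ⁅A₁, B₂⁆ = 0 ∧ ⁅A₂, B₁⁆ = 0 ∧
    ⁅A₁, A₂⁆ = 0 ∧ ⁅B₁, B₂⁆ = 0 := by
  intro eν eν' A₁ A₂ B₁ B₂
  letI : LieRing 𝔄 := LieRing.ofAssociativeRing
  have hee : eν * eν' = 1 := by
    rw [← Complex.exp_add, add_neg_cancel, Complex.exp_zero]
  have hs : ((Real.sqrt 2 : ℂ))⁻¹ * ((Real.sqrt 2 : ℂ))⁻¹ = (2:ℂ)⁻¹ := by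
    rw [← mul_inv, ← Complex.ofReal_mul, Real.mul_self_sqrt (by norm_num)]
    norm_num
  have hp1x1 : ⁅p₁, x₁⁆ = -(Complex.I • (1 : 𝔄)) := by rw [← lie_skew, h11]
  have hp2x2 : ⁅p₂, x₂⁆ = -(Complex.I • (1 : 𝔄)) := by rw [← lie_skew, h22]
  have hp2x1 : ⁅p₂, x₁⁆ = 0 := by rw [← lie_skew, h12, neg_zero]
  have hp1x2 : ⁅p₁, x₂⁆ = 0 := by rw [← lie_skew, h21, neg_zero]
  have hx2x1 : ⁅x₂, x₁⁆ = -((Complex.I * θ) • (1 : 𝔄)) := by rw [← lie_skew, hxx]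
  have hp2p1 : ⁅p₂, p₁⁆ = 0 := by rw [← lie_skew, hpp, neg_zero]
  refine ⟨?_, ?_, ?_, ?_, ?_, ?_⟩ <;>
  · show ⁅((Real.sqrt 2 : ℂ))⁻¹ • _, ((Real.sqrt 2 : ℂ))⁻¹ • _⁆ = _
    simp only [lie_add, add_lie, lie_sub, sub_lie, lie_smul, smul_lie, lie_self,
      h11, h22, h12, h21, hxx, hpp, hp1x1, hp2x2, hp2x1, hp1x2, hx2x1, hp2p1,
      smul_zero, smul_neg, smul_smul, add_zero, zero_add, sub_zero, zero_sub, neg_neg,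
      ← add_smul, ← sub_smul, ← neg_smul]
    match_scalars
    first
    | ring1
    | linear_combination (-2*((Real.sqrt 2 : ℂ))⁻¹^2*(eν*eν'))*Complex.I_mul_I +
        (2*(eν*eν'))*hs + hee
end

section
/- For ν ∈ ℝ with |ν| < π/4, and φ_{n₁,n₂}(x₁,x₂) = N₁(2^{n₁+n₂}n₁!n₂!)^{−1/2} H_{n₁}(e^{iν}x₁)H_{n₂}(e^{iν}x₂)exp(−(1/2)e^{2iν}(x₁²+x₂²)), the L² norm satisfies ‖φ_{n₁,n₂}‖² = (π|N₁|²/cos 2ν) · P_{n₁}(1/cos 2ν) · P_{n₂}(1/cos 2ν), where Pₙ is the n-th Legendre polynomial. -/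
open MeasureTheory Complex

/-- Physicists' Hermite polynomials, as functions `ℂ → ℂ`. -/
noncomputable def hermiteH : ℕ → ℂ → ℂ
  | 0, _ => 1
  | 1, x => 2 * x
  | (n + 2), x => 2 * x * hermiteH (n + 1) x - 2 * (n + 1) * hermiteH n x

/-- Legendre polynomials `Pₙ`, via Bonnet's recursion
`(n+2)P_{n+2}(x) = (2n+3)x P_{n+1}(x) - (n+1) Pₙ(x)`. -/
noncomputable def legendreP : ℕ → ℝ → ℝ
  | 0, _ => 1
  | 1, x => x
  | (n + 2), x => ((2*n+3) * x * legendreP (n+1) x - (n+1) * legendreP n x) / (n+2)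

open Filter Polynomial

namespace SwansonAux



lemma gauss_bound {b : ℝ} (hb : 0 < b) (n : ℕ) (x : ℝ) :
    |x ^ n * Real.exp (-b * x^2)| ≤
      (n.factorial * Real.exp (1/(2*b))) * Real.exp (-(b/2) * x^2) := by
  have h1 : |x ^ n * Real.exp (-b * x^2)| = |x|^n * Real.exp (-b*x^2) := by
    rw [abs_mul, _root_.abs_pow, abs_of_pos (Real.exp_pos _)]
  rw [h1]
  have h2 : |x|^n ≤ n.factorial * Real.exp |x| := by
    have := Real.pow_div_factorial_le_exp (x := |x|) (abs_nonneg x) n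
    rw [div_le_iff₀ (by positivity)] at this
    linarith [this]
  have h2b : (0:ℝ) < 2*b := by linarith
  have key : |x| - b*x^2 ≤ 1/(2*b) + -(b/2)*x^2 := by
    have h : 2*b*|x| ≤ 1 + b^2*x^2 := by nlinarith [sq_nonneg (b*|x| - 1), _root_.sq_abs x]
    calc |x| - b*x^2 = (2*b*|x| - 2*b^2*x^2)/(2*b) := by field_simp
      _ ≤ (1 + b^2*x^2 - 2*b^2*x^2)/(2*b) := by gcongr <;> linarith
      _ = 1/(2*b) + -(b/2)*x^2 := by field_simp; ring
  calc |x|^n * Real.exp (-b*x^2) ≤ (n.factorial * Real.exp |x|) * Real.exp (-b*x^2) := by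
        apply mul_le_mul_of_nonneg_right h2 (Real.exp_pos _).le
    _ = n.factorial * Real.exp (|x| - b*x^2) := by rw [mul_assoc, ← Real.exp_add]; ring_nf
    _ ≤ (n.factorial * Real.exp (1/(2*b))) * Real.exp (-(b/2) * x^2) := by
        rw [mul_assoc, ← Real.exp_add]
        exact mul_le_mul_of_nonneg_left (Real.exp_le_exp.2 key) (by positivity)

lemma integrable_pow_gauss {b : ℝ} (hb : 0 < b) (n : ℕ) :
    Integrable (fun x : ℝ => x ^ n * Real.exp (-b * x^2)) := by
  apply Integrable.mono' (((integrable_exp_neg_mul_sq (half_pos hb)).const_mul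
    (n.factorial * Real.exp (1/(2*b)))))
  · exact ((continuous_pow n).mul (Continuous.rexp (by continuity))).aestronglyMeasurable
  · refine Filter.Eventually.of_forall fun x => ?_
    rw [Real.norm_eq_abs]
    exact gauss_bound hb n x

lemma tendsto_pow_gauss {b : ℝ} (hb : 0 < b) (n : ℕ) (l : Filter ℝ)
    (hl : Tendsto (fun x : ℝ => x^2) l atTop) :
    Tendsto (fun x : ℝ => x ^ n * Real.exp (-b * x^2)) l (nhds 0) := by
  apply squeeze_zero_norm (fun x => gauss_bound hb n x)
  rw [show (0:ℝ) = (n.factorial * Real.exp (1/(2*b))) * 0 by ring]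
  apply Tendsto.const_mul
  have h1 : Tendsto (fun x : ℝ => -((b/2) * x^2)) l atBot := by
    exact tendsto_neg_atBot_iff.mpr (hl.const_mul_atTop (half_pos hb))
  have := Real.tendsto_exp_atBot.comp h1
  simpa [Function.comp_def, neg_mul] using this

lemma sq_tendsto_atTop : Tendsto (fun x : ℝ => x^2) atTop atTop := by
  simpa using tendsto_pow_atTop (two_ne_zero)

lemma sq_tendsto_atBot : Tendsto (fun x : ℝ => x^2) atBot atTop := by
  have := sq_tendsto_atTop.comp tendsto_neg_atBot_atTop
  simpa [Function.comp_def] using this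


lemma integral_deriv_zero (f f' : ℝ → ℝ) (hd : ∀ x, HasDerivAt f (f' x) x)
    (hi : Integrable f') (htop : Tendsto f atTop (nhds 0))
    (hbot : Tendsto f atBot (nhds 0)) : ∫ x, f' x = 0 := by
  have h1 : ∫ x in Set.Iic (0:ℝ), f' x = f 0 - 0 :=
    integral_Iic_of_hasDerivAt_of_tendsto' (fun x _ => hd x) hi.integrableOn hbot
  have h2 : ∫ x in Set.Ioi (0:ℝ), f' x = 0 - f 0 :=
    integral_Ioi_of_hasDerivAt_of_tendsto' (fun x _ => hd x) hi.integrableOn htop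
  rw [← intervalIntegral.integral_Iic_add_Ioi (b := (0:ℝ)) hi.integrableOn hi.integrableOn, h1, h2]
  ring

noncomputable def gmom (b : ℝ) (k : ℕ) : ℝ := ∫ x : ℝ, x ^ k * Real.exp (-b * x^2)

lemma gmom_zero {b : ℝ} (hb : 0 < b) : gmom b 0 = Real.sqrt (Real.pi / b) := by
  unfold gmom
  simp only [pow_zero, one_mul]
  exact integral_gaussian b

lemma hasDerivAt_gauss {b : ℝ} (x : ℝ) :
    HasDerivAt (fun x : ℝ => Real.exp (-b*x^2)) (-2*b*x * Real.exp (-b*x^2)) x := by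
  have h1 : HasDerivAt (fun x : ℝ => -b*x^2) (-2*b*x) x := by
    have := (hasDerivAt_pow 2 x).const_mul (-b)
    refine this.congr_deriv ?_
    push_cast
    ring
  convert h1.exp using 1
  ring

lemma gmom_one {b : ℝ} (hb : 0 < b) : gmom b 1 = 0 := by
  have hd : ∀ x : ℝ, HasDerivAt (fun x : ℝ => -(1/(2*b)) * Real.exp (-b*x^2))
      (x^1 * Real.exp (-b*x^2)) x := by
    intro x
    have := (hasDerivAt_gauss (b := b) x).const_mul (-(1/(2*b)))
    refine this.congr_deriv ?_
    have hb0 : b ≠ 0 := hb.ne'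
    field_simp
  exact integral_deriv_zero _ _ hd (integrable_pow_gauss hb 1)
    (by simpa using (tendsto_pow_gauss hb 0 atTop sq_tendsto_atTop).const_mul (-(1/(2*b))))
    (by simpa using (tendsto_pow_gauss hb 0 atBot sq_tendsto_atBot).const_mul (-(1/(2*b))))

lemma gmom_rec {b : ℝ} (hb : 0 < b) (k : ℕ) :
    (k+1 : ℝ) * gmom b k = 2*b * gmom b (k+2) := by
  have hd : ∀ x : ℝ, HasDerivAt (fun x : ℝ => x^(k+1) * Real.exp (-b*x^2))
      ((k+1 : ℝ) * (x^k * Real.exp (-b*x^2)) - 2*b*(x^(k+2) * Real.exp (-b*x^2))) x := by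
    intro x
    have := (hasDerivAt_pow (k+1) x).mul (hasDerivAt_gauss (b := b) x)
    refine this.congr_deriv ?_
    push_cast
    ring
  have hint : Integrable (fun x : ℝ =>
      (k+1 : ℝ) * (x^k * Real.exp (-b*x^2)) - 2*b*(x^(k+2) * Real.exp (-b*x^2))) :=
    ((integrable_pow_gauss hb k).const_mul _).sub ((integrable_pow_gauss hb (k+2)).const_mul _)
  have h0 := integral_deriv_zero _ _ hd hint
    (tendsto_pow_gauss hb (k+1) atTop sq_tendsto_atTop)
    (tendsto_pow_gauss hb (k+1) atBot sq_tendsto_atBot)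
  rw [integral_sub ((integrable_pow_gauss hb k).const_mul _)
      ((integrable_pow_gauss hb (k+2)).const_mul _),
    integral_const_mul, integral_const_mul] at h0
  unfold gmom
  linarith [h0]



noncomputable def hPoly : ℕ → Polynomial ℂ
  | 0 => 1
  | 1 => C 2 * X
  | (n + 2) => C 2 * X * hPoly (n + 1) - C (2 * ((n:ℂ) + 1)) * hPoly n

lemma hPoly_eval (n : ℕ) (z : ℂ) : (hPoly n).eval z = hermiteH n z := by
  induction n using Nat.twoStepInduction with
  | zero => simp [hPoly, hermiteH]
  | one => simp [hPoly, hermiteH]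
  | more n ih1 ih2 =>
    simp only [hPoly, hermiteH, eval_sub, eval_mul, eval_C, eval_X, ih1, ih2]

lemma hPoly_rec (n : ℕ) :
    hPoly (n + 1) = C 2 * X * hPoly n - C (2 * (n:ℂ)) * hPoly (n - 1) := by
  cases n with
  | zero => simp [hPoly]
  | succ m =>
    show _ = _
    rw [show hPoly (m + 1 + 1) = C 2 * X * hPoly (m + 1) - C (2 * ((m:ℂ) + 1)) * hPoly m from rfl]
    push_cast
    ring

lemma hPoly_deriv (n : ℕ) :
    derivative (hPoly n) = C (2 * (n:ℂ)) * hPoly (n - 1) := by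
  induction n using Nat.twoStepInduction with
  | zero => simp [hPoly]
  | one => simp [hPoly]
  | more n ih1 ih2 =>
    show derivative (hPoly (n+2)) = C (2 * ((n+2 : ℕ) : ℂ)) * hPoly (n+1)
    rw [show hPoly (n+2) = C 2 * X * hPoly (n + 1) - C (2 * ((n:ℂ)+1)) * hPoly n from rfl]
    rw [derivative_sub, derivative_mul, derivative_mul, derivative_mul, ih1, ih2]
    simp only [derivative_C, derivative_X, Nat.add_sub_cancel]
    rw [hPoly_rec n]
    push_cast
    simp only [map_add, map_mul, map_ofNat, map_one]
    ring

/-- `Hₙ(b·x)` as a polynomial in `x`. -/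
noncomputable def Ha (b : ℂ) (n : ℕ) : Polynomial ℂ := (hPoly n).comp (C b * X)

lemma Ha_eval (b : ℂ) (n : ℕ) (z : ℂ) : (Ha b n).eval z = hermiteH n (b * z) := by
  simp [Ha, eval_comp, hPoly_eval]

lemma Ha_zero (b : ℂ) : Ha b 0 = 1 := by simp [Ha, hPoly]

lemma Ha_rec (b : ℂ) (n : ℕ) :
    Ha b (n + 1) = C (2 * b) * X * Ha b n - C (2 * (n:ℂ)) * Ha b (n - 1) := by
  unfold Ha
  rw [hPoly_rec n]
  simp only [sub_comp, mul_comp, C_comp, X_comp]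
  push_cast
  simp only [map_add, map_mul, map_ofNat, map_one]
  ring

lemma Ha_deriv (b : ℂ) (n : ℕ) :
    derivative (Ha b n) = C (2 * (n:ℂ) * b) * Ha b (n - 1) := by
  unfold Ha
  rw [derivative_comp, hPoly_deriv]
  simp only [derivative_mul, derivative_C, derivative_X, mul_comp, C_comp]
  push_cast
  simp only [map_add, map_mul, map_ofNat, map_one]
  ring



lemma integral_complex_ofReal {μ : MeasureTheory.Measure ℝ} {f : ℝ → ℝ} :
    (∫ t, ((f t : ℝ) : ℂ) ∂μ) = ((∫ t, f t ∂μ : ℝ) : ℂ) :=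
  integral_ofReal

noncomputable def Lfun (p : ℝ) (f : Polynomial ℂ) : ℂ :=
  ∫ t : ℝ, f.eval (t:ℂ) * Complex.exp (-(p:ℂ) * (t:ℂ)^2)

lemma mono_integrand (p : ℝ) (k : ℕ) (c : ℂ) (t : ℝ) :
    (monomial k c).eval (t:ℂ) * Complex.exp (-(p:ℂ) * (t:ℂ)^2)
      = c * ((t ^ k * Real.exp (-p * t^2) : ℝ) : ℂ) := by
  have : (-(p:ℂ) * (t:ℂ)^2) = ((-p * t^2 : ℝ) : ℂ) := by push_cast; ring
  rw [eval_monomial, this, ← Complex.ofReal_exp]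
  push_cast
  ring

lemma L_integrable {p : ℝ} (hp : 0 < p) (f : Polynomial ℂ) :
    Integrable (fun t : ℝ => f.eval (t:ℂ) * Complex.exp (-(p:ℂ) * (t:ℂ)^2)) := by
  induction f using Polynomial.induction_on' with
  | add f g hf hg =>
    simp only [eval_add, add_mul]
    exact hf.add hg
  | monomial k c =>
    simp only [mono_integrand]
    exact ((integrable_pow_gauss hp k).ofReal (𝕜 := ℂ)).const_mul c

lemma L_add {p : ℝ} (hp : 0 < p) (f g : Polynomial ℂ) :
    Lfun p (f + g) = Lfun p f + Lfun p g := by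
  unfold Lfun
  simp only [eval_add, add_mul]
  exact integral_add (L_integrable hp f) (L_integrable hp g)

lemma L_Cmul (p : ℝ) (r : ℂ) (f : Polynomial ℂ) :
    Lfun p (C r * f) = r * Lfun p f := by
  unfold Lfun
  simp only [eval_mul, eval_C, mul_assoc]
  exact integral_const_mul r _

lemma L_monomial (p : ℝ) (k : ℕ) (c : ℂ) :
    Lfun p (monomial k c) = c * ((gmom p k : ℝ) : ℂ) := by
  unfold Lfun
  simp only [mono_integrand]
  rw [integral_const_mul, integral_complex_ofReal]
  rfl

lemma L_deriv {p : ℝ} (hp : 0 < p) (f : Polynomial ℂ) :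
    Lfun p (derivative f) = 2 * p * Lfun p (X * f) := by
  induction f using Polynomial.induction_on' with
  | add f g hf hg =>
    rw [derivative_add, mul_add, L_add hp, L_add hp, hf, hg, mul_add]
  | monomial k c =>
    rw [derivative_monomial, X_mul_monomial, L_monomial, L_monomial]
    cases k with
    | zero => simp [gmom_one hp]
    | succ m =>
      have hpc : ((p:ℂ)) ≠ 0 := by exact_mod_cast ne_of_gt hp
      have hC : ((m:ℂ)+1) * ((gmom p m : ℝ) : ℂ) = 2*(p:ℂ)*((gmom p (m+2) : ℝ) : ℂ) := by
        exact_mod_cast gmom_rec hp m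
      rw [Nat.add_sub_cancel]
      push_cast
      linear_combination c * hC



noncomputable def Jf (p : ℝ) (b c : ℂ) (m n : ℕ) : ℂ := Lfun p (Ha b m * Ha c n)

lemma Jf_symm (p : ℝ) (b c : ℂ) (m n : ℕ) : Jf p b c m n = Jf p c b n m := by
  unfold Jf; rw [mul_comm]

lemma J_rel {p : ℝ} (hp : 0 < p) {b c : ℂ} (hbc : b * c = 1) (m n : ℕ) :
    (p:ℂ) * Jf p b c (m+1) n =
      2*m*(b^2 - p) * Jf p b c (m-1) n + 2*n * Jf p b c m (n-1) := by
  have key := L_deriv hp (Ha b m * Ha c n)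
  have k1 : Lfun p (derivative (Ha b m * Ha c n))
      = 2*(m:ℂ)*b * Jf p b c (m-1) n + 2*(n:ℂ)*c * Jf p b c m (n-1) := by
    rw [derivative_mul, Ha_deriv, Ha_deriv,
      show C (2*(m:ℂ)*b) * Ha b (m-1) * Ha c n + Ha b m * (C (2*(n:ℂ)*c) * Ha c (n-1))
        = C (2*(m:ℂ)*b) * (Ha b (m-1) * Ha c n) + C (2*(n:ℂ)*c) * (Ha b m * Ha c (n-1)) by ring,
      L_add hp, L_Cmul, L_Cmul]
    rfl
  have k2 : 2*b * Lfun p (X * (Ha b m * Ha c n))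
      = Jf p b c (m+1) n + 2*(m:ℂ) * Jf p b c (m-1) n := by
    rw [← L_Cmul p (2*b),
      show C (2*b) * (X * (Ha b m * Ha c n)) = (C (2*b) * X * Ha b m) * Ha c n by ring,
      show C (2*b) * X * Ha b m = Ha b (m+1) + C (2*(m:ℂ)) * Ha b (m-1) by
        rw [Ha_rec b m]; ring,
      show (Ha b (m+1) + C (2*(m:ℂ)) * Ha b (m-1)) * Ha c n
        = Ha b (m+1) * Ha c n + C (2*(m:ℂ)) * (Ha b (m-1) * Ha c n) by ring,
      L_add hp, L_Cmul]
    rfl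
  linear_combination b * k1 - b * key - (p:ℂ) * k2
    + (2*(n:ℂ) * Jf p b c m (n-1)) * hbc



lemma Jf_zero {p : ℝ} (hp : 0 < p) (b c : ℂ) :
    Jf p b c 0 0 = ((Real.sqrt (Real.pi / p) : ℝ) : ℂ) := by
  rw [show Jf p b c 0 0 = Lfun p (Ha b 0 * Ha c 0) from rfl, Ha_zero, Ha_zero, one_mul,
    show (1 : Polynomial ℂ) = monomial 0 1 by simp, L_monomial, gmom_zero hp]
  simp



noncomputable def cseq (p : ℝ) (n : ℕ) : ℝ :=
  2^n * n.factorial * Real.sqrt (Real.pi / p) * legendreP n (1/p)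

noncomputable def dseq (p : ℝ) (c : ℂ) : ℕ → ℂ
  | 0 => 2*(c^2 - (p:ℂ)) * ((cseq p 0 : ℝ) : ℂ) / (p:ℂ)
  | (n+1) => (2*((n:ℂ)+2)*(c^2 - (p:ℂ)) * ((cseq p (n+1) : ℝ) : ℂ)
      + 2*((n:ℂ)+1) * dseq p c n) / (p:ℂ)

lemma cseq_zero (p : ℝ) : cseq p 0 = Real.sqrt (Real.pi / p) := by
  simp [cseq, legendreP]

lemma cseq_one {p : ℝ} (hp : 0 < p) : p * cseq p 1 = 2 * cseq p 0 := by
  simp only [cseq, legendreP]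
  field_simp
  ring

lemma bonnet {p : ℝ} (hp : 0 < p) (n : ℕ) :
    p * cseq p (n+2) = 2*(2*n+3) * cseq p (n+1) - 4*(n+1)^2 * p * cseq p n := by
  simp only [cseq, legendreP]
  rw [Nat.factorial_succ (n+1), Nat.factorial_succ n]
  have : ((n:ℝ)+2) ≠ 0 := by positivity
  field_simp
  push_cast
  ring

lemma dseq_rec0 {p : ℝ} (hp : 0 < p) (c : ℂ) :
    (p:ℂ) * dseq p c 0 = 2*(c^2 - (p:ℂ)) * ((cseq p 0 : ℝ) : ℂ) := by
  have hpc : ((p:ℂ)) ≠ 0 := by exact_mod_cast ne_of_gt hp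
  rw [show dseq p c 0 = 2*(c^2 - (p:ℂ)) * ((cseq p 0 : ℝ) : ℂ) / (p:ℂ) from rfl]
  field_simp

lemma dseq_recS {p : ℝ} (hp : 0 < p) (c : ℂ) (n : ℕ) :
    (p:ℂ) * dseq p c (n+1) = 2*((n:ℂ)+2)*(c^2 - (p:ℂ)) * ((cseq p (n+1) : ℝ) : ℂ)
      + 2*((n:ℂ)+1) * dseq p c n := by
  have hpc : ((p:ℂ)) ≠ 0 := by exact_mod_cast ne_of_gt hp
  rw [show dseq p c (n+1) = (2*((n:ℂ)+2)*(c^2 - (p:ℂ)) * ((cseq p (n+1) : ℝ) : ℂ)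
      + 2*((n:ℂ)+1) * dseq p c n) / (p:ℂ) from rfl]
  field_simp

lemma bonnetC {p : ℝ} (hp : 0 < p) (n : ℕ) :
    (p:ℂ) * ((cseq p (n+2) : ℝ) : ℂ)
      = 2*(2*(n:ℂ)+3) * ((cseq p (n+1) : ℝ) : ℂ)
        - 4*((n:ℂ)+1)^2 * (p:ℂ) * ((cseq p n : ℝ) : ℂ) := by
  exact_mod_cast congrArg (Complex.ofReal) (bonnet hp n)

lemma cseq_oneC {p : ℝ} (hp : 0 < p) :
    (p:ℂ) * ((cseq p 1 : ℝ) : ℂ) = 2 * ((cseq p 0 : ℝ) : ℂ) := by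
  exact_mod_cast congrArg (Complex.ofReal) (cseq_one hp)

lemma Eid {p : ℝ} (hp : 0 < p) {a c : ℂ}
    (hprod : (a^2 - (p:ℂ)) * (c^2 - (p:ℂ)) = 1 - (p:ℂ)^2) (n : ℕ) :
    (p:ℂ) * ((cseq p (n+2) : ℝ) : ℂ)
      = 2*((n:ℂ)+1)*(a^2 - (p:ℂ)) * dseq p c n
        + 2*((n:ℂ)+2) * ((cseq p (n+1) : ℝ) : ℂ) := by
  have hpc : ((p:ℂ)) ≠ 0 := by exact_mod_cast ne_of_gt hp
  induction n with
  | zero =>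
    apply mul_left_cancel₀ hpc
    have h0 := dseq_rec0 hp c
    have hb := bonnetC hp 0
    have h1 := cseq_oneC hp
    push_cast at hb ⊢
    linear_combination (-2*(a^2 - (p:ℂ))) * h0 - 4*((cseq p 0 : ℝ) : ℂ) * hprod
      + (p:ℂ) * hb + 2*h1
  | succ n ih =>
    apply mul_left_cancel₀ hpc
    have hS := dseq_recS hp c n
    have hb := bonnetC hp (n+1)
    push_cast at hb ⊢
    linear_combination (-2*((n:ℂ)+2)*(a^2 - (p:ℂ))) * hS
      - 4*((n:ℂ)+2)^2 * ((cseq p (n+1) : ℝ) : ℂ) * hprod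
      + (p:ℂ) * hb + (2*((n:ℂ)+2)) * ih



lemma Adiag_aux {p : ℝ} (hp : 0 < p) {a c : ℂ} (hac : a * c = 1)
    (hprod : (a^2 - (p:ℂ)) * (c^2 - (p:ℂ)) = 1 - (p:ℂ)^2) (n : ℕ) :
    Jf p a c n n = ((cseq p n : ℝ) : ℂ) ∧
    Jf p a c (n+1) (n+1) = ((cseq p (n+1) : ℝ) : ℂ) ∧
    Jf p a c n (n+2) = dseq p c n := by
  have hpc : ((p:ℂ)) ≠ 0 := by exact_mod_cast ne_of_gt hp
  have hca : c * a = 1 := by rwa [mul_comm]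
  have rel1 : ∀ k : ℕ, (p:ℂ) * Jf p a c (k+1) (k+1)
      = 2*(k:ℂ)*(a^2 - (p:ℂ)) * Jf p a c (k-1) (k+1)
        + 2*((k:ℂ)+1) * Jf p a c k k := by
    intro k
    have h := J_rel hp hac k (k+1)
    simp only [Nat.add_sub_cancel] at h
    push_cast at h
    exact h
  have rel2 : ∀ k : ℕ, (p:ℂ) * Jf p a c k (k+2)
      = 2*((k:ℂ)+1)*(c^2 - (p:ℂ)) * Jf p a c k k
        + 2*(k:ℂ) * Jf p a c (k-1) (k+1) := by
    intro k
    have h := J_rel hp hca (k+1) k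
    simp only [Jf_symm p c a, Nat.add_sub_cancel] at h
    push_cast at h
    exact h
  induction n with
  | zero =>
    have hA0 : Jf p a c 0 0 = ((cseq p 0 : ℝ) : ℂ) := by
      rw [Jf_zero hp, cseq_zero]
    refine ⟨hA0, ?_, ?_⟩
    · apply mul_left_cancel₀ hpc
      have h := rel1 0
      rw [hA0] at h
      rw [h, cseq_oneC hp]
      push_cast
      ring
    · apply mul_left_cancel₀ hpc
      have h := rel2 0
      rw [hA0] at h
      rw [h, dseq_rec0 hp]
      push_cast
      ring
  | succ n ih =>
    obtain ⟨h1, h2, h3⟩ := ih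
    refine ⟨h2, ?_, ?_⟩
    · apply mul_left_cancel₀ hpc
      have h := rel1 (n+1)
      simp only [Nat.add_sub_cancel] at h
      rw [h2, h3] at h
      rw [h, Eid hp hprod n]
      push_cast
      ring
    · apply mul_left_cancel₀ hpc
      have h := rel2 (n+1)
      simp only [Nat.add_sub_cancel] at h
      rw [h2, h3] at h
      rw [h, dseq_recS hp]
      push_cast
      ring

lemma Adiag {p : ℝ} (hp : 0 < p) {a c : ℂ} (hac : a * c = 1)
    (hprod : (a^2 - (p:ℂ)) * (c^2 - (p:ℂ)) = 1 - (p:ℂ)^2) (n : ℕ) :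
    Jf p a c n n = ((cseq p n : ℝ) : ℂ) :=
  (Adiag_aux hp hac hprod n).1


section Nu

variable {ν : ℝ}

lemma conj_hermiteH (n : ℕ) (z : ℂ) :
    (starRingEnd ℂ) (hermiteH n z) = hermiteH n ((starRingEnd ℂ) z) := by
  induction n using Nat.twoStepInduction generalizing z with
  | zero => simp [hermiteH]
  | one => simp [hermiteH, map_mul, map_ofNat]
  | more n ih1 ih2 =>
    simp only [hermiteH, map_sub, map_mul, ih1, ih2, map_ofNat, map_add, map_natCast, map_one]

lemma cos2_pos (hν : |ν| < Real.pi / 4) : 0 < Real.cos (2*ν) := by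
  have h := abs_lt.1 hν
  apply Real.cos_pos_of_mem_Ioo
  constructor <;> [linarith [h.1]; linarith [h.2]]

lemma conj_aν : (starRingEnd ℂ) (Complex.exp (Complex.I * ν)) = Complex.exp (-(Complex.I * ν)) := by
  rw [← Complex.exp_conj, map_mul, Complex.conj_I, Complex.conj_ofReal, neg_mul]

lemma aν_mul : Complex.exp (Complex.I * ν) * Complex.exp (-(Complex.I * ν)) = 1 := by
  rw [← Complex.exp_add]
  simp

lemma aν_sq_add : Complex.exp (Complex.I * ν)^2 + Complex.exp (-(Complex.I * ν))^2
    = 2 * ((Real.cos (2*ν) : ℝ) : ℂ) := by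
  have h1 : Complex.exp (Complex.I * ν)^2 = Complex.exp (((2*ν : ℝ) : ℂ) * Complex.I) := by
    rw [sq, ← Complex.exp_add]
    congr 1
    push_cast
    ring
  have h2 : Complex.exp (-(Complex.I * ν))^2 = Complex.exp (((-(2*ν) : ℝ) : ℂ) * Complex.I) := by
    rw [sq, ← Complex.exp_add]
    congr 1
    push_cast
    ring
  rw [h1, h2, Complex.exp_mul_I, Complex.exp_mul_I, Complex.ofReal_cos]
  push_cast
  rw [Complex.cos_neg, Complex.sin_neg]
  ring

lemma aν_prod : (Complex.exp (Complex.I * ν)^2 - ((Real.cos (2*ν) : ℝ) : ℂ))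
    * (Complex.exp (-(Complex.I * ν))^2 - ((Real.cos (2*ν) : ℝ) : ℂ))
    = 1 - ((Real.cos (2*ν) : ℝ) : ℂ)^2 := by
  have h1 := aν_mul (ν := ν)
  have h2 := aν_sq_add (ν := ν)
  linear_combination (Complex.exp (Complex.I * ν) * Complex.exp (-(Complex.I * ν)) + 1) * h1
    - ((Real.cos (2*ν) : ℝ) : ℂ) * h2

lemma oneD (hν : |ν| < Real.pi / 4) (n : ℕ) :
    ∫ t : ℝ, ‖hermiteH n (Complex.exp (Complex.I * ν) * t)‖^2
      * Real.exp (-(Real.cos (2*ν)) * t^2) = cseq (Real.cos (2*ν)) n := by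
  set p := Real.cos (2*ν) with hpdef
  have hp : 0 < p := cos2_pos hν
  set a := Complex.exp (Complex.I * ν) with hadef
  set c := Complex.exp (-(Complex.I * ν)) with hcdef
  have key : ∀ t : ℝ, ((‖hermiteH n (a * t)‖^2 * Real.exp (-p * t^2) : ℝ) : ℂ)
      = (Ha a n * Ha c n).eval (t:ℂ) * Complex.exp (-(p:ℂ) * (t:ℂ)^2) := by
    intro t
    rw [eval_mul, Ha_eval, Ha_eval]
    have hc : hermiteH n (c * t) = (starRingEnd ℂ) (hermiteH n (a * t)) := by
      rw [conj_hermiteH, map_mul, conj_aν, Complex.conj_ofReal]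
    rw [hc]
    rw [Complex.mul_conj]
    have he : Complex.exp (-(p:ℂ) * (t:ℂ)^2) = ((Real.exp (-p * t^2) : ℝ) : ℂ) := by
      rw [Complex.ofReal_exp]
      congr 1
      push_cast
      ring
    rw [he]
    rw [Complex.normSq_eq_norm_sq]
    push_cast
    ring
  have : ((∫ t : ℝ, ‖hermiteH n (a * t)‖^2 * Real.exp (-p * t^2) : ℝ) : ℂ)
      = ((cseq p n : ℝ) : ℂ) := by
    rw [← integral_complex_ofReal]
    calc (∫ t : ℝ, ((‖hermiteH n (a * t)‖^2 * Real.exp (-p * t^2) : ℝ) : ℂ))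
        = ∫ t : ℝ, (Ha a n * Ha c n).eval (t:ℂ) * Complex.exp (-(p:ℂ) * (t:ℂ)^2) := by
          exact integral_congr_ae (Filter.Eventually.of_forall key)
      _ = Jf p a c n n := rfl
      _ = ((cseq p n : ℝ) : ℂ) := Adiag hp aν_mul aν_prod n
  exact_mod_cast this

end Nu

end SwansonAux

open SwansonAux in
/-- The squared `L²` norms of the eigenstates of the 2d Swanson Hamiltonian:
`‖φ_{n₁,n₂}‖² = (π|N₁|²/cos 2ν) P_{n₁}(1/cos 2ν) P_{n₂}(1/cos 2ν)`. -/
theorem swanson_eigenstate_norms (ν : ℝ) (hν : |ν| < Real.pi / 4)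
    (N₁ : ℂ) (n₁ n₂ : ℕ)
    (φ : ℝ × ℝ → ℂ)
    (hφ : ∀ x : ℝ × ℝ, φ x =
      N₁ * ((Real.sqrt (2^(n₁+n₂) * n₁.factorial * n₂.factorial) : ℂ))⁻¹ *
        hermiteH n₁ (Complex.exp (Complex.I * ν) * x.1) *
        hermiteH n₂ (Complex.exp (Complex.I * ν) * x.2) *
        Complex.exp (-(1/2) * Complex.exp (2 * Complex.I * ν) * (x.1^2 + x.2^2))) :
    ∫ x : ℝ × ℝ, ‖φ x‖^2 =
      (Real.pi * ‖N₁‖ ^ 2 / Real.cos (2*ν)) *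
        legendreP n₁ (1 / Real.cos (2*ν)) * legendreP n₂ (1 / Real.cos (2*ν)) := by
  have hp : 0 < Real.cos (2*ν) := SwansonAux.cos2_pos hν
  set p := Real.cos (2*ν) with hpdef
  set a : ℂ := Complex.exp (Complex.I * ν) with hadef
  set D : ℝ := 2^(n₁+n₂) * n₁.factorial * n₂.factorial with hDdef
  have hD0 : (0:ℝ) < D := by positivity
  set f : ℝ → ℝ := fun t => ‖hermiteH n₁ (a * t)‖^2 * Real.exp (-p * t^2) with hfdef
  set g : ℝ → ℝ := fun t => ‖hermiteH n₂ (a * t)‖^2 * Real.exp (-p * t^2) with hgdef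
  have hre : ∀ s : ℝ, ‖Complex.exp (-(1/2) * Complex.exp (2*Complex.I*(ν:ℂ)) * ((s:ℝ):ℂ))‖
      = Real.exp (-(1/2) * p * s) := by
    intro s
    rw [Complex.norm_exp]
    congr 1
    rw [show (2*Complex.I*(ν:ℂ)) = ((2*ν : ℝ):ℂ) * Complex.I by push_cast; ring]
    simp only [Complex.mul_re, Complex.mul_im, Complex.ofReal_re, Complex.ofReal_im,
      Complex.exp_ofReal_mul_I_re, Complex.exp_ofReal_mul_I_im, Complex.neg_re, Complex.neg_im,
      Complex.div_ofNat_re, Complex.one_re, Complex.one_im, Complex.div_ofNat_im]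
    ring_nf
    rw [hpdef]
    ring
  have hpt : ∀ x : ℝ × ℝ, ‖φ x‖^2 = (‖N₁‖^2 / D) * (f x.1 * g x.2) := by
    intro x
    rw [hφ x,
      show ((x.1:ℂ)^2 + (x.2:ℂ)^2) = ((x.1^2 + x.2^2 : ℝ) : ℂ) by push_cast; ring,
      show ((2:ℂ) * Complex.I * (ν:ℂ)) = (2*Complex.I*(ν:ℂ)) from rfl]
    simp only [norm_mul]
    rw [hre (x.1^2+x.2^2), norm_inv, Complex.norm_real,
      Real.norm_eq_abs, _root_.abs_of_nonneg (Real.sqrt_nonneg _)]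
    rw [mul_pow, mul_pow, mul_pow, mul_pow, inv_pow, Real.sq_sqrt (le_of_lt hD0)]
    rw [show (Real.exp (-(1/2) * p * (x.1^2+x.2^2)))^2
        = Real.exp (-p * x.1^2) * Real.exp (-p * x.2^2) by
      rw [sq, ← Real.exp_add, ← Real.exp_add]; congr 1; ring]
    rw [hfdef, hgdef]
    simp only []
    field_simp
  calc ∫ x : ℝ × ℝ, ‖φ x‖^2
      = ∫ x : ℝ × ℝ, (‖N₁‖^2 / D) * (f x.1 * g x.2) := by simp only [hpt]
    _ = (‖N₁‖^2 / D) * ∫ x : ℝ × ℝ, f x.1 * g x.2 := integral_const_mul _ _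
    _ = (‖N₁‖^2 / D) * ((∫ t : ℝ, f t) * (∫ t : ℝ, g t)) := by
        rw [show (volume : MeasureTheory.Measure (ℝ × ℝ)) = volume.prod volume from
          MeasureTheory.Measure.volume_eq_prod ℝ ℝ, MeasureTheory.integral_prod_mul]
    _ = (‖N₁‖^2 / D) * (cseq p n₁ * cseq p n₂) := by
        rw [hfdef, hgdef, hadef, oneD hν n₁, oneD hν n₂]
    _ = (Real.pi * ‖N₁‖ ^ 2 / p) * legendreP n₁ (1/p) * legendreP n₂ (1/p) := by
        have hsq : Real.sqrt (Real.pi / p) * Real.sqrt (Real.pi / p) = Real.pi / p :=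
          Real.mul_self_sqrt (by positivity)
        have hcc : cseq p n₁ * cseq p n₂
            = D * ((Real.pi/p) * (legendreP n₁ (1/p) * legendreP n₂ (1/p))) := by
          unfold cseq
          rw [hDdef, pow_add]
          linear_combination ((2:ℝ)^n₁ * n₁.factorial * (2:ℝ)^n₂ * n₂.factorial *
            legendreP n₁ (1/p) * legendreP n₂ (1/p)) * hsq
        rw [hcc]
        field_simp
end

section
/- Let {αₙ} satisfy 0 = α₀ < α₁ < α₂ < ⋯ with supₙ αₙ = ᾱ (possibly ∞), let {φₙ} be vectors in a Hilbert space with ‖φₙ‖ ≤ A r^n Mₙ where Mₙ/M_{n+1} → M as n → ∞, and let a be a linear operator with a φₙ = αₙ φ_{n−1} (n ≥ 1), a φ₀ = 0. Set ρ = ᾱ·min(1, M/r) and, for |z| < ρ, define φ(z) = N(|z|) Σ_{k≥0} (z^k/(α_k!)) φ_k where α_k! = α₁α₂⋯α_k (α₀! = 1) and N(|z|) = (Σ_k |z|^{2k}/(α_k!)²)^{−1/2}. Then the series defining φ(z) converges in norm for |z| < ρ, and (assuming a is closed or continuous enough to commute with the limit) a φ(z) = z φ(z). -/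
open scoped ENNReal

/-- General theorem on coherent states for a lowering operator `a φₙ = αₙ φ_{n-1}`:
if `‖φₙ‖ ≤ A rⁿ Mₙ` with `Mₙ/M_{n+1} → M` (possibly `∞`), then for every `z` with
`|z| < ρ = ᾱ·min(1, M/r)` the series `φ(z) = N(|z|) Σ (z^k/αₖ!) φₖ` converges in
norm and `a φ(z) = z φ(z)` (here `a` is continuous, so it commutes with limits). -/
theorem coherent_state_general
    {H : Type*} [NormedAddCommGroup H] [InnerProductSpace ℂ H] [CompleteSpace H]
    (α : ℕ → ℝ) (hα0 : α 0 = 0) (hαmono : StrictMono α)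
    (φ : ℕ → H) (A r : ℝ) (hA : 0 < A) (hr : 0 < r)
    (M : ℕ → ℝ) (hMpos : ∀ n, 0 < M n) (Mlim : ℝ≥0∞)
    (hMlim : Filter.Tendsto (fun n => ENNReal.ofReal (M n / M (n+1)))
      Filter.atTop (nhds Mlim))
    (hbound : ∀ n, ‖φ n‖ ≤ A * r^n * M n)
    (a : H →L[ℂ] H)
    (ha : ∀ n : ℕ, 1 ≤ n → a (φ n) = (α n : ℂ) • φ (n-1)) (ha0 : a (φ 0) = 0)
    (z : ℂ)
    (hz : ENNReal.ofReal (‖z‖) <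
      (⨆ n, ENNReal.ofReal (α n)) * min 1 (Mlim / ENNReal.ofReal r)) :
    let αfact : ℕ → ℝ := fun k => ∏ i ∈ Finset.range k, α (i+1)
    let Nz : ℝ := (∑' k : ℕ, ‖z‖^(2*k) / (αfact k)^2)^(-(1:ℝ)/2)
    Summable (fun k : ℕ => (z^k / (αfact k : ℂ)) • φ k) ∧
    a ((Nz : ℂ) • ∑' k : ℕ, (z^k / (αfact k : ℂ)) • φ k) =
      z • ((Nz : ℂ) • ∑' k : ℕ, (z^k / (αfact k : ℂ)) • φ k) := by
  intro αfact Nz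
  set S : ℝ≥0∞ := ⨆ n, ENNReal.ofReal (α n) with hS
  have hαpos : ∀ n, 0 < α (n+1) := fun n => hα0 ▸ hαmono (Nat.succ_pos n)
  have hfactpos : ∀ k, 0 < αfact k := fun k => Finset.prod_pos fun i _ => hαpos i
  have hfactsucc : ∀ k, αfact (k+1) = αfact k * α (k+1) := fun k =>
    Finset.prod_range_succ _ k
  -- S ≠ 0
  have hS0 : S ≠ 0 := by
    intro h
    have h1 : ENNReal.ofReal (α 1) ≤ S := le_iSup (fun n => ENNReal.ofReal (α n)) 1
    rw [h, le_zero_iff] at h1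
    exact (ENNReal.ofReal_pos.2 (hαpos 0)).ne' h1
  have hr0 : ENNReal.ofReal r ≠ 0 := (ENNReal.ofReal_pos.2 hr).ne'
  -- key product bound
  have hwr : ENNReal.ofReal (‖z‖ * r) < S * Mlim := by
    have h1 : ENNReal.ofReal (‖z‖) < S * Mlim / ENNReal.ofReal r := by
      rw [mul_div_assoc]
      exact lt_of_lt_of_le hz (mul_le_mul_right (min_le_right _ _) S)
    have h2 := (ENNReal.lt_div_iff_mul_lt (Or.inl hr0) (Or.inl ENNReal.ofReal_ne_top)).1 h1
    rwa [ENNReal.ofReal_mul (norm_nonneg z)]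
  have hM0 : Mlim ≠ 0 := by
    intro h
    rw [h, mul_zero] at hwr
    exact absurd hwr (not_lt.2 zero_le)
  -- convergence of the ratio sequence
  have hαtend : Filter.Tendsto (fun n => ENNReal.ofReal (α (n+1))) Filter.atTop (nhds S) := by
    have hmono : Monotone (fun n => ENNReal.ofReal (α n)) :=
      fun i j hij => ENNReal.ofReal_le_ofReal (hαmono.monotone hij)
    have := tendsto_atTop_iSup hmono
    exact this.comp (Filter.tendsto_add_atTop_nat 1)
  have hT : Filter.Tendsto
      (fun n => ENNReal.ofReal (α (n+1)) * ENNReal.ofReal (M n / M (n+1)))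
      Filter.atTop (nhds (S * Mlim)) :=
    ENNReal.Tendsto.mul hαtend (Or.inl hS0) hMlim (Or.inl hM0)
  obtain ⟨l, hl1, hl2⟩ := exists_between hwr
  have hlt : l ≠ ⊤ := hl2.ne_top
  have hl0 : l ≠ 0 := ((zero_le).trans_lt hl1).ne'
  set lr : ℝ := l.toReal with hlr_def
  have hlr : 0 < lr := ENNReal.toReal_pos hl0 hlt
  have hzrlt : ‖z‖ * r < lr :=
    (ENNReal.ofReal_lt_iff_lt_toReal (by positivity) hlt).1 hl1
  set c : ℝ := ‖z‖ * r with hc_def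
  have hc0 : 0 ≤ c := by positivity
  set K : ℝ := c / lr with hK_def
  have hK1 : K < 1 := (div_lt_one hlr).2 hzrlt
  have hK0 : 0 ≤ K := div_nonneg hc0 hlr.le
  -- eventual ratio bound
  have hev : ∀ᶠ n in Filter.atTop, lr * M (n+1) ≤ α (n+1) * M n := by
    filter_upwards [hT.eventually (eventually_gt_nhds hl2)] with n hn
    rw [← ENNReal.ofReal_mul (hαpos n).le] at hn
    have h3 : lr < α (n+1) * (M n / M (n+1)) :=
      (ENNReal.lt_ofReal_iff_toReal_lt hlt).1 hn
    have hM1 := hMpos (n+1)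
    rw [← mul_div_assoc] at h3
    exact ((lt_div_iff₀ hM1).1 h3).le
  -- the dominating series
  set g : ℕ → ℝ := fun n => A * c^n * (M n / αfact n) with hg_def
  have hgpos : ∀ n, 0 ≤ g n := fun n => by
    have := (hMpos n).le
    have := (hfactpos n).le
    positivity
  have hgsum : Summable g := by
    apply summable_of_ratio_norm_eventually_le hK1
    filter_upwards [hev] with n hn
    rw [Real.norm_of_nonneg (hgpos _), Real.norm_of_nonneg (hgpos _)]
    have key : M (n+1) / α (n+1) ≤ M n / lr := by
      rw [div_le_div_iff₀ (hαpos n) hlr]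
      nlinarith [hn]
    have e1 : g (n+1) = A * c^(n+1) * (1 / αfact n) * (M (n+1) / α (n+1)) := by
      rw [hg_def]
      simp only
      rw [hfactsucc n]
      field_simp
      try ring
    have e2 : K * g n = A * c^(n+1) * (1 / αfact n) * (M n / lr) := by
      rw [hK_def, hg_def]
      simp only
      field_simp
      try ring
    rw [e1, e2]
    have hnn : 0 ≤ A * c^(n+1) * (1 / αfact n) := by
      have := (hfactpos n).le
      positivity
    exact mul_le_mul_of_nonneg_left key hnn
  -- summability of the series
  have hnormle : ∀ k, ‖(z^k / (αfact k : ℂ)) • φ k‖ ≤ g k := by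
    intro k
    rw [norm_smul]
    have h1 : ‖z^k / (αfact k : ℂ)‖ = ‖z‖ ^ k / αfact k := by
      rw [norm_div, norm_pow, Complex.norm_real,
        Real.norm_of_nonneg (hfactpos k).le]
    rw [h1]
    have h2 : ‖z‖ ^ k / αfact k * ‖φ k‖ ≤
        ‖z‖ ^ k / αfact k * (A * r^k * M k) := by
      apply mul_le_mul_of_nonneg_left (hbound k)
      have := (hfactpos k).le
      positivity
    refine h2.trans (le_of_eq ?_)
    rw [hg_def, hc_def]
    simp only
    rw [mul_pow]
    field_simp
  have hsum : Summable (fun k : ℕ => (z^k / (αfact k : ℂ)) • φ k) :=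
    Summable.of_norm_bounded hgsum hnormle
  refine ⟨hsum, ?_⟩
  -- the eigenvalue relation
  set f : ℕ → H := fun k => (z^k / (αfact k : ℂ)) • φ k with hf_def
  have haf : ∀ k, a (f (k+1)) = z • f k := by
    intro k
    rw [hf_def]
    simp only
    rw [map_smul, ha (k+1) (Nat.le_add_left 1 k)]
    simp only [Nat.add_sub_cancel]
    rw [smul_smul, ← smul_assoc]
    congr 1
    rw [hfactsucc k]
    have hαne : (α (k+1) : ℂ) ≠ 0 := by
      exact_mod_cast (hαpos k).ne'
    have hfne : ((αfact k : ℝ) : ℂ) ≠ 0 := by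
      exact_mod_cast (hfactpos k).ne'
    push_cast
    field_simp
    rw [smul_eq_mul, mul_left_comm, mul_div_assoc', mul_div_cancel_left₀ _ hfne, pow_succ']
  have haf0 : a (f 0) = 0 := by
    rw [hf_def]
    simp only [pow_zero]
    rw [map_smul, ha0, smul_zero]
  have hsumaf : Summable (fun k => a (f k)) := hsum.map a.toLinearMap.toAddMonoidHom a.continuous
  have hts : a (∑' k, f k) = ∑' k, a (f k) := a.map_tsum hsum
  have ht2 : ∑' k, a (f k) = z • ∑' k, f k := by
    rw [hsumaf.tsum_eq_zero_add]
    simp only [haf, haf0, zero_add]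
    exact (hsum.hasSum.const_smul z).tsum_eq
  rw [map_smul, hts, ht2, smul_comm]
end
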